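/- Suppose w ∈ Ŵ is dominant and let c be the first-layer ideal of w, i.e. the ad-nilpotent ideal with I_c = {γ ∈ Δ⁺ : w(δ−γ) ∈ −Δ̂⁺}. If ν ∈ Π and w(ν) ∈ Π̂, then g_{−ν} ⊆ n_g(c). -/

import Mathlib

open scoped RealInnerProductSpace
open scoped Classical

set_option linter.unusedSectionVars false

noncomputable section

/-- Axiomatization of the root system (with a fixed base and positive system) of a
complex simple Lie algebra `g` with Cartan subalgebra `t ⊆ b`: a finite, reduced,
crystallographic root system, invariant under its reflections, in a euclidean vector
space `V` (the real span of the roots, with a Weyl-group-invariant inner product),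
together with the set `Pi` of simple roots and the set `Δpos` of positive roots. -/
structure RootSystemData (V : Type*) [NormedAddCommGroup V] [InnerProductSpace ℝ V]
    [FiniteDimensional ℝ V] where
  /-- the set of all roots -/
  Δ : Finset V
  /-- the set of simple roots -/
  Pi : Finset V
  /-- the set of positive roots -/
  Δpos : Finset V
  zero_not_mem : (0 : V) ∉ Δ
  neg_mem : ∀ ⦃α⦄, α ∈ Δ → -α ∈ Δ
  reflect_mem : ∀ ⦃α⦄, α ∈ Δ → ∀ ⦃β⦄, β ∈ Δ → β - (2 * ⟪β, α⟫ / ⟪α, α⟫) • α ∈ Δ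
  crystallographic : ∀ ⦃α⦄, α ∈ Δ → ∀ ⦃β⦄, β ∈ Δ → ∃ n : ℤ, 2 * ⟪β, α⟫ = n * ⟪α, α⟫
  reduced : ∀ ⦃α⦄, α ∈ Δ → ∀ t : ℝ, t • α ∈ Δ → t = 1 ∨ t = -1
  Pi_subset : Pi ⊆ Δpos
  Pi_indep : LinearIndependent ℝ (Subtype.val : {x : V // x ∈ Pi} → V)
  Pi_span : Submodule.span ℝ (Pi : Set V) = ⊤
  Δpos_subset : Δpos ⊆ Δ
  mem_Δpos_iff : ∀ ⦃γ⦄, γ ∈ Δ →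
    (γ ∈ Δpos ↔ ∃ c : V → ℕ, γ = ∑ α ∈ Pi, (c α : ℝ) • α)
  pos_or_neg : ∀ ⦃γ⦄, γ ∈ Δ → γ ∈ Δpos ∨ -γ ∈ Δpos

variable {V : Type*} [NormedAddCommGroup V] [InnerProductSpace ℝ V] [FiniteDimensional ℝ V]

/-- `θ` is the highest root: `θ ∈ Δ⁺` and `γ ≼ θ` for every positive root `γ`. -/
def RootSystemData.IsHighestRoot (R : RootSystemData V) (θ : V) : Prop :=
  θ ∈ R.Δpos ∧ ∀ γ ∈ R.Δpos, ∃ c : V → ℕ, θ - γ = ∑ α ∈ R.Pi, (c α : ℝ) • α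

/-- An upper ideal of the root poset `(Δ⁺, ≼)`: a subset `I ⊆ Δ⁺` such that if
`γ ∈ I`, `μ ∈ Δ⁺` and `γ + μ` is a root, then `γ + μ ∈ I`.  Upper ideals correspond
bijectively to the ad-nilpotent ideals `c = ⊕_{γ ∈ I} g_γ` of the Borel subalgebra
`b` (the ideals of `b` contained in `u = [b, b]`). -/
def RootSystemData.IsUpperIdeal (R : RootSystemData V) (I : Finset V) : Prop :=
  I ⊆ R.Δpos ∧ ∀ γ ∈ I, ∀ μ ∈ R.Δpos, γ + μ ∈ R.Δ → γ + μ ∈ I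

/-- The weight `|c| = Σ_{γ ∈ I_c} γ` of an ad-nilpotent ideal. -/
def idealWeight {V : Type*} [NormedAddCommGroup V] [InnerProductSpace ℝ V]
    [FiniteDimensional ℝ V] (I : Finset V) : V := ∑ γ ∈ I, γ

/-- The condition `g_{-α} ⊆ n_g(c)` for a simple root `α` and the ad-nilpotent ideal
`c = ⊕_{γ ∈ I} g_γ`.  Since `[g_{-α}, g_γ] = g_{γ-α}` when `γ - α` is a root,
`[g_{-α}, g_α] ⊆ t` and `[g_{-α}, g_γ] = 0` otherwise (and `γ - α ∈ Δ` with
`γ ∈ Δ⁺`, `α` simple forces `γ - α ∈ Δ⁺`), the root space `g_{-α}` normalizes `c`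
if and only if `α ∉ I` and `I` is closed under subtracting `α` inside `Δ`.
(The normalizer `n_g(c)` is the standard parabolic subalgebra generated by `b` and
those `g_{-α}`, `α ∈ Π`, satisfying this condition.) -/
def RootSystemData.NegSimpleRootInNormalizer (R : RootSystemData V) (I : Finset V)
    (α : V) : Prop :=
  α ∉ I ∧ ∀ γ ∈ I, γ - α ∈ R.Δ → γ - α ∈ I

/-- The extended space `V̂ = V ⊕ ℝδ ⊕ ℝλ`, with `δ = (0,1,0)` and `λ = (0,0,1)`. -/
abbrev AffSpace (V : Type*) := V × ℝ × ℝ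

/-- The extension of the inner product to `V̂`:
`(δ,V) = (λ,V) = (δ,δ) = (λ,λ) = 0` and `(δ,λ) = 1`. -/
def affForm (x y : AffSpace V) : ℝ := ⟪x.1, y.1⟫ + x.2.1 * y.2.2 + x.2.2 * y.2.1

/-- The basic imaginary root `δ`. -/
def affDelta (V : Type*) [NormedAddCommGroup V] [InnerProductSpace ℝ V] : AffSpace V :=
  (0, 1, 0)

/-- The element `λ`, with `(δ, λ) = 1`. -/
def affLambda (V : Type*) [NormedAddCommGroup V] [InnerProductSpace ℝ V] : AffSpace V :=
  (0, 0, 1)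

/-- The canonical embedding `V → V̂`. -/
def affIota (v : V) : AffSpace V := (v, 0, 0)

lemma affForm_add_left (x y z : AffSpace V) :
    affForm (x + y) z = affForm x z + affForm y z := by
  simp [affForm, inner_add_left]; ring

lemma affForm_smul_left (a : ℝ) (x z : AffSpace V) :
    affForm (a • x) z = a * affForm x z := by
  simp [affForm, real_inner_smul_left]; ring

/-- The reflection of `V̂` in (the hyperplane orthogonal to) `β`, as a linear map:
`x ↦ x - (x, β∨) β`. -/
def affReflectMap (β : AffSpace V) : AffSpace V →ₗ[ℝ] AffSpace V where
  toFun x := x - (2 * affForm x β / affForm β β) • β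
  map_add' x y := by
    rw [affForm_add_left, mul_add, add_div, add_smul]
    abel
  map_smul' a x := by
    dsimp only [RingHom.id_apply]
    rw [affForm_smul_left, smul_sub, smul_smul]
    congr 2
    ring

lemma affReflectMap_involutive (β : AffSpace V) :
    Function.Involutive (affReflectMap (V := V) β) := by
  intro x
  show (affReflectMap β) ((affReflectMap β) x) = x
  simp only [affReflectMap, LinearMap.coe_mk, AddHom.coe_mk]
  set c := affForm β β with hc0
  set t := 2 * affForm x β / c with ht
  have hF : affForm (x - t • β) β = affForm x β - t * c := by
    have h1 : x - t • β = x + (-t) • β := by rw [neg_smul]; abel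
    rw [h1, affForm_add_left, affForm_smul_left]; ring
  have key : 2 * affForm (x - t • β) β / c = -t := by
    rw [hF, ht]
    by_cases hc : c = 0
    · simp [hc]
    · field_simp
      ring
  rw [key, neg_smul]
  abel

/-- The reflection of `V̂` in `β`, as a linear automorphism. -/
def affReflect (β : AffSpace V) : AffSpace V ≃ₗ[ℝ] AffSpace V :=
  LinearEquiv.ofLinear (affReflectMap β) (affReflectMap β)
    (LinearMap.ext fun x => affReflectMap_involutive β x)
    (LinearMap.ext fun x => affReflectMap_involutive β x)

/-- The set `Π̂ = Π ∪ {α₀}` of affine simple roots, where `α₀ = δ - θ`. -/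
def affSimpleRoots (R : RootSystemData V) (θ : V) : Set (AffSpace V) :=
  (fun α => affIota α) '' (R.Pi : Set V) ∪ {affDelta V - affIota θ}

/-- The set `Δ̂⁺ = Δ⁺ ∪ {μ + kδ : μ ∈ Δ, k ≥ 1}` of positive affine roots. -/
def affPosRoots (R : RootSystemData V) : Set (AffSpace V) :=
  (fun μ => affIota μ) '' (R.Δpos : Set V) ∪
    {x | ∃ μ ∈ R.Δ, ∃ k : ℕ, 1 ≤ k ∧ x = affIota μ + (k : ℝ) • affDelta V}

/-- The affine Weyl group `Ŵ`, realized through its linear action on `V̂`: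
the subgroup of `GL(V̂)` generated by the reflections in the affine simple roots. -/
def affWeylGroup (R : RootSystemData V) (θ : V) :
    Subgroup (AffSpace V ≃ₗ[ℝ] AffSpace V) :=
  Subgroup.closure (affReflect '' affSimpleRoots R θ)

/-- `N(w) = {μ ∈ Δ̂⁺ : w(μ) ∈ -Δ̂⁺}`. -/
def affInversionSet (R : RootSystemData V) (w : AffSpace V ≃ₗ[ℝ] AffSpace V) :
    Set (AffSpace V) :=
  {x | x ∈ affPosRoots R ∧ -(w x) ∈ affPosRoots R}

/-- `|N(w)| = Σ_{μ ∈ N(w)} μ` (a finite sum whenever `w ∈ Ŵ`). -/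
def affInversionSum (R : RootSystemData V) (w : AffSpace V ≃ₗ[ℝ] AffSpace V) :
    AffSpace V :=
  ∑ᶠ x ∈ affInversionSet R w, x

/-- `w ∈ Ŵ` is dominant if `w(α) ∈ Δ̂⁺` for every `α ∈ Π`. -/
def IsDominant (R : RootSystemData V) (w : AffSpace V ≃ₗ[ℝ] AffSpace V) : Prop :=
  ∀ α ∈ R.Pi, w (affIota α) ∈ affPosRoots R

/-!
The Weyl group `Ŵ` fixes `δ` and permutes the affine roots. Extend the height of `V` to `V̂`
by giving `δ` height `ht θ + 1`: positive affine roots then have height `≥ 1` and affine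
simple roots height `1`. Hence `w(ν) - δ` is not positive, which is `ν ∉ I`; and for `γ ∈ I`
with `γ - ν ∈ Δ`, the affine root `w(δ - (γ - ν))` cannot be positive, since adding the
positive root `-w(δ - γ)` to it gives the simple root `w(ν)`.
-/

lemma affReflect_apply (β x : AffSpace V) :
    affReflect β x = x - (2 * affForm x β / affForm β β) • β := rfl

namespace RootSystemData

open scoped Pointwise

variable (R : RootSystemData V)

def simpleBasis : Module.Basis R.Pi ℝ V :=
  .mk R.Pi_indep (by rw [Subtype.range_coe_subtype, Finset.setOfPred_mem, R.Pi_span])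

def height : V →ₗ[ℝ] ℝ := R.simpleBasis.sumCoords

lemma height_of_mem_Pi {α : V} (hα : α ∈ R.Pi) : R.height α = 1 := by
  have := R.simpleBasis.sumCoords_self_apply (i := ⟨α, hα⟩)
  rwa [simpleBasis, Module.Basis.mk_apply] at this

lemma height_sum_natCast_smul (c : V → ℕ) :
    R.height (∑ α ∈ R.Pi, (c α : ℝ) • α) = ∑ α ∈ R.Pi, (c α : ℝ) := by
  simp only [map_sum, map_smul, smul_eq_mul]
  exact Finset.sum_congr rfl fun α hα => by rw [R.height_of_mem_Pi hα, mul_one]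

lemma one_le_height_of_mem_Δpos {γ : V} (hγ : γ ∈ R.Δpos) : 1 ≤ R.height γ := by
  obtain ⟨c, rfl⟩ := (R.mem_Δpos_iff (R.Δpos_subset hγ)).1 hγ
  have hne : ∑ α ∈ R.Pi, c α ≠ 0 := fun h0 => by
    rw [Finset.sum_eq_zero_iff] at h0
    have hzero : ∑ α ∈ R.Pi, (c α : ℝ) • α = 0 :=
      Finset.sum_eq_zero fun α hα => by rw [h0 α hα, Nat.cast_zero, zero_smul]
    exact R.zero_not_mem (hzero ▸ R.Δpos_subset hγ)
  rw [height_sum_natCast_smul, ← Nat.cast_sum]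
  exact_mod_cast Nat.one_le_iff_ne_zero.2 hne

lemma neg_height_le_height {θ μ : V} (hθ : R.IsHighestRoot θ) (hμ : μ ∈ R.Δ) :
    -R.height θ ≤ R.height μ := by
  rcases R.pos_or_neg hμ with hpos | hneg
  · linarith [R.one_le_height_of_mem_Δpos hpos, R.one_le_height_of_mem_Δpos hθ.1]
  · obtain ⟨c, hc⟩ := hθ.2 _ hneg
    have : 0 ≤ R.height (θ - -μ) := by
      rw [hc, height_sum_natCast_smul]
      positivity
    rw [map_sub, map_neg] at this
    linarith

lemma sub_mem_Δpos_of_mem_Pi {γ ν : V} (hγ : γ ∈ R.Δpos) (hν : ν ∈ R.Pi)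
    (h : γ - ν ∈ R.Δ) : γ - ν ∈ R.Δpos := by
  refine (R.pos_or_neg h).resolve_right fun hneg => ?_
  have := R.one_le_height_of_mem_Δpos hneg
  rw [neg_sub, map_sub, R.height_of_mem_Pi hν] at this
  linarith [R.one_le_height_of_mem_Δpos hγ]

/-- `δ` gets height `ht θ + 1`, so that `δ - θ`, like every simple root, has height `1`. -/
def affHeight (θ : V) : AffSpace V →ₗ[ℝ] ℝ :=
  R.height ∘ₗ LinearMap.fst ℝ V (ℝ × ℝ) +
    (R.height θ + 1) • (LinearMap.fst ℝ ℝ ℝ ∘ₗ LinearMap.snd ℝ V (ℝ × ℝ))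

lemma affHeight_apply (θ : V) (x : AffSpace V) :
    R.affHeight θ x = R.height x.1 + (R.height θ + 1) * x.2.1 := rfl

lemma affHeight_of_mem_affSimpleRoots {θ : V} {β : AffSpace V}
    (hβ : β ∈ affSimpleRoots R θ) : R.affHeight θ β = 1 := by
  rcases hβ with ⟨α, hα, rfl⟩ | rfl
  · simp [affHeight_apply, affIota, R.height_of_mem_Pi hα]
  · simp [affHeight_apply, affIota, affDelta]

lemma one_le_affHeight_of_mem_affPosRoots {θ : V} (hθ : R.IsHighestRoot θ) {x : AffSpace V}
    (hx : x ∈ affPosRoots R) : 1 ≤ R.affHeight θ x := by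
  rcases hx with ⟨μ, hμ, rfl⟩ | ⟨μ, hμ, k, hk, rfl⟩
  · simpa [affHeight_apply, affIota] using R.one_le_height_of_mem_Δpos hμ
  · have hk' : (1 : ℝ) ≤ k := by exact_mod_cast hk
    have := R.neg_height_le_height hθ hμ
    have := R.one_le_height_of_mem_Δpos hθ.1
    simp only [affHeight_apply, affIota, affDelta, Prod.fst_add, Prod.snd_add, Prod.smul_fst,
      Prod.smul_snd, smul_zero, smul_eq_mul, add_zero, zero_add, mul_one]
    nlinarith

lemma add_ne_of_mem_affSimpleRoots {θ : V} (hθ : R.IsHighestRoot θ) {p q β : AffSpace V}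
    (hp : p ∈ affPosRoots R) (hq : q ∈ affPosRoots R) (hβ : β ∈ affSimpleRoots R θ) :
    p + q ≠ β := fun h => by
  have := R.affHeight_of_mem_affSimpleRoots hβ
  rw [← h, map_add] at this
  linarith [R.one_le_affHeight_of_mem_affPosRoots hθ hp,
    R.one_le_affHeight_of_mem_affPosRoots hθ hq]

lemma sub_affDelta_not_mem_affPosRoots {θ : V} (hθ : R.IsHighestRoot θ) {β : AffSpace V}
    (hβ : β ∈ affSimpleRoots R θ) : β - affDelta V ∉ affPosRoots R := fun h => by
  have := R.one_le_affHeight_of_mem_affPosRoots hθ h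
  rw [map_sub, R.affHeight_of_mem_affSimpleRoots hβ, affHeight_apply] at this
  simp only [affDelta, map_zero, mul_one, zero_add] at this
  linarith [R.one_le_height_of_mem_Δpos hθ.1]

def affRoots : Set (AffSpace V) :=
  {x | ∃ μ ∈ R.Δ, ∃ k : ℤ, x = affIota μ + (k : ℝ) • affDelta V}

lemma mem_affPosRoots_or_neg_mem_of_mem_affRoots {x : AffSpace V} (hx : x ∈ R.affRoots) :
    x ∈ affPosRoots R ∨ -x ∈ affPosRoots R := by
  obtain ⟨μ, hμ, k, rfl⟩ := hx
  obtain ⟨n, hk⟩ := Int.eq_nat_or_neg k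
  rcases Nat.eq_zero_or_pos n with rfl | hn
  · obtain rfl : k = 0 := by omega
    rcases R.pos_or_neg hμ with hpos | hneg
    · exact .inl (.inl ⟨μ, hpos, by simp⟩)
    · exact .inr (.inl ⟨-μ, hneg, by ext <;> simp [affIota]⟩)
  · rcases hk with rfl | rfl
    · exact .inl (.inr ⟨μ, hμ, n, hn, by simp⟩)
    · exact .inr (.inr ⟨-μ, R.neg_mem hμ, n, hn, by ext <;> simp [affIota, affDelta]⟩)

lemma affReflect_mem_affRoots {β x : AffSpace V} (hβ : β ∈ R.affRoots) (hx : x ∈ R.affRoots) :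
    affReflect β x ∈ R.affRoots := by
  obtain ⟨α, hα, j, rfl⟩ := hβ
  obtain ⟨μ, hμ, k, rfl⟩ := hx
  obtain ⟨n, hn⟩ := R.crystallographic hα hμ
  have hαα : ⟪α, α⟫ ≠ 0 := inner_self_ne_zero.2 fun h => R.zero_not_mem (h ▸ hα)
  have hcoef : 2 * ⟪μ, α⟫ / ⟪α, α⟫ = n := by
    rw [div_eq_iff hαα, hn]
  refine ⟨μ - (n : ℝ) • α, hcoef ▸ R.reflect_mem hα hμ, k - n * j, ?_⟩
  have hform : 2 * affForm (affIota μ + (k : ℝ) • affDelta V) (affIota α + (j : ℝ) • affDelta V) /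
      affForm (affIota α + (j : ℝ) • affDelta V) (affIota α + (j : ℝ) • affDelta V) = n := by
    simpa [affForm, affIota, affDelta] using hcoef
  rw [affReflect_apply, hform]
  ext <;> simp [affIota, affDelta]

lemma affReflect_affDelta {β : AffSpace V} (hβ : β.2.2 = 0) :
    affReflect β (affDelta V) = affDelta V := by
  simp [affReflect_apply, affForm, affDelta, hβ]

lemma affSimpleRoots_subset_affRoots {θ : V} (hθ : θ ∈ R.Δ) :
    affSimpleRoots R θ ⊆ R.affRoots := by
  rintro _ (⟨α, hα, rfl⟩ | rfl)
  · exact ⟨α, R.Δpos_subset (R.Pi_subset hα), 0, by simp⟩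
  · exact ⟨-θ, R.neg_mem hθ, 1, by ext <;> simp [affIota, affDelta]⟩

lemma affWeylGroup_apply_affDelta {θ : V} (hθ : θ ∈ R.Δ) {w : AffSpace V ≃ₗ[ℝ] AffSpace V}
    (hw : w ∈ affWeylGroup R θ) : w (affDelta V) = affDelta V := by
  suffices affWeylGroup R θ ≤ MulAction.stabilizer _ (affDelta V) from this hw
  refine (Subgroup.closure_le _).2 ?_
  rintro _ ⟨β, hβ, rfl⟩
  obtain ⟨μ, -, k, rfl⟩ := R.affSimpleRoots_subset_affRoots hθ hβ
  exact affReflect_affDelta (by simp [affIota, affDelta])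

lemma affWeylGroup_mapsTo_affRoots {θ : V} (hθ : θ ∈ R.Δ) {w : AffSpace V ≃ₗ[ℝ] AffSpace V}
    (hw : w ∈ affWeylGroup R θ) : Set.MapsTo w R.affRoots R.affRoots := by
  suffices affWeylGroup R θ ≤ MulAction.stabilizer _ R.affRoots from
    fun x hx => (this hw : w • R.affRoots = R.affRoots) ▸ Set.smul_mem_smul_set hx
  refine (Subgroup.closure_le _).2 ?_
  rintro _ ⟨β, hβ, rfl⟩
  have hmaps : Set.MapsTo (affReflect β) R.affRoots R.affRoots :=
    fun x => R.affReflect_mem_affRoots (R.affSimpleRoots_subset_affRoots hθ hβ)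
  rw [SetLike.mem_coe, MulAction.mem_stabilizer_iff, ← Set.image_smul]
  refine hmaps.image_subset.antisymm fun x hx => ⟨affReflect β x, hmaps hx, ?_⟩
  exact affReflectMap_involutive β x

end RootSystemData

theorem negSimple_in_normalizer_of_firstLayer_general
    {V : Type*} [NormedAddCommGroup V] [InnerProductSpace ℝ V] [FiniteDimensional ℝ V]
    (R : RootSystemData V) (θ : V) (hθ : R.IsHighestRoot θ)
    (w : AffSpace V ≃ₗ[ℝ] AffSpace V) (hw : w ∈ affWeylGroup R θ)
    (I : Finset V)
    (hfl : ∀ γ : V, γ ∈ I ↔ γ ∈ R.Δpos ∧ -(w (affDelta V - affIota γ)) ∈ affPosRoots R)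
    (ν : V) (hν : ν ∈ R.Pi) (hsimple : w (affIota ν) ∈ affSimpleRoots R θ) :
    R.NegSimpleRootInNormalizer I ν := by
  have hθΔ : θ ∈ R.Δ := R.Δpos_subset hθ.1
  have hδ : w (affDelta V) = affDelta V := R.affWeylGroup_apply_affDelta hθΔ hw
  refine ⟨fun hνI => ?_, fun γ hγI hγν => ?_⟩
  · have hneg := ((hfl ν).1 hνI).2
    rw [map_sub, hδ, neg_sub] at hneg
    exact R.sub_affDelta_not_mem_affPosRoots hθ hsimple hneg
  · obtain ⟨hγpos, hγneg⟩ := (hfl γ).1 hγI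
    refine (hfl _).2 ⟨R.sub_mem_Δpos_of_mem_Pi hγpos hν hγν, ?_⟩
    have hroot : w (affDelta V - affIota (γ - ν)) ∈ R.affRoots :=
      R.affWeylGroup_mapsTo_affRoots hθΔ hw
        ⟨-(γ - ν), R.neg_mem hγν, 1, by ext <;> simp [affIota, affDelta]⟩
    refine (R.mem_affPosRoots_or_neg_mem_of_mem_affRoots hroot).resolve_left fun hpos => ?_
    refine R.add_ne_of_mem_affSimpleRoots hθ hpos hγneg hsimple ?_
    rw [← map_neg, ← map_add]
    congr 1
    ext <;> simp [affIota, affDelta]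

/-- Theorem 3.2.  Suppose `w ∈ Ŵ` is dominant and let `c` be the
first-layer ideal of `w`, i.e. the ad-nilpotent ideal with root set
`I = {γ ∈ Δ⁺ : w(δ - γ) ∈ -Δ̂⁺}`.  If `ν ∈ Π` and `w(ν) ∈ Π̂`, then
`g_{-ν} ⊆ n_g(c)`. -/
theorem negSimple_in_normalizer_of_firstLayer
    {V : Type*} [NormedAddCommGroup V] [InnerProductSpace ℝ V] [FiniteDimensional ℝ V]
    (R : RootSystemData V) (θ : V) (hθ : R.IsHighestRoot θ)
    (w : AffSpace V ≃ₗ[ℝ] AffSpace V) (hw : w ∈ affWeylGroup R θ)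
    (hdom : IsDominant R w)
    (I : Finset V)
    (hfl : ∀ γ : V, γ ∈ I ↔ γ ∈ R.Δpos ∧ -(w (affDelta V - affIota γ)) ∈ affPosRoots R)
    (ν : V) (hν : ν ∈ R.Pi) (hsimple : w (affIota ν) ∈ affSimpleRoots R θ) :
    R.NegSimpleRootInNormalizer I ν :=
  negSimple_in_normalizer_of_firstLayer_general R θ hθ w hw I hfl ν hν hsimple
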